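/- An infinite path satisfies an ATL+ path formula Φ in the infinite path semantics if and only if there exists k such that all long enough finite prefixes (of length at least k) satisfy Φ in the finite path semantics. Formally: M,λ ⊨ Φ iff ∃k ∈ ℕ such that for every finite prefix λ₀ of λ with lgt(λ₀) ≥ k, M,λ₀ ⊨ Φ. -/

import Mathlib

/-- A concurrent game model. -/
structure CGM (Agt St Act : Type) where
  d : Agt → St → Set Act
  d_ne : ∀ a q, (d a q).Nonempty
  o : St → (Agt → Act) → St
  v : ℕ → Set St

/-- `Λ` is an infinite path in `M`. -/
def CGM.IsPath {Agt St Act : Type} (M : CGM Agt St Act) (Λ : ℕ → St) : Prop :=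
  ∀ n, ∃ α : Agt → Act, (∀ a, α a ∈ M.d a (Λ n)) ∧ Λ (n + 1) = M.o (Λ n) α

/-- ATL⁺ path formulae over an abstract type `σ` of state formulae (whose
truth at a state is prefix-independent): Boolean combinations of state
formulae, `X φ`, and `φ U ψ`. -/
inductive PathFormula (σ : Type) where
  | state : σ → PathFormula σ
  | neg : PathFormula σ → PathFormula σ
  | or : PathFormula σ → PathFormula σ → PathFormula σ
  | next : σ → PathFormula σ
  | until_ : σ → σ → PathFormula σ

/-- Finite path semantics: truth on the prefix of `Λ` of length `n`
(`X φ` requires length ≥ 1; `φ U ψ` requires a witness within the prefix). -/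
def finTruth {σ St : Type} (sat : σ → St → Prop) (Λ : ℕ → St) :
    PathFormula σ → ℕ → Prop
  | .state φ, _ => sat φ (Λ 0)
  | .neg Φ, n => ¬ finTruth sat Λ Φ n
  | .or Φ Ψ, n => finTruth sat Λ Φ n ∨ finTruth sat Λ Ψ n
  | .next φ, n => 1 ≤ n ∧ sat φ (Λ 1)
  | .until_ φ ψ, n => ∃ i ≤ n, sat ψ (Λ i) ∧ ∀ j < i, sat φ (Λ j)

/-- Standard (infinite path) semantics of ATL⁺ path formulae. -/
def infTruth {σ St : Type} (sat : σ → St → Prop) (Λ : ℕ → St) :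
    PathFormula σ → Prop
  | .state φ => sat φ (Λ 0)
  | .neg Φ => ¬ infTruth sat Λ Φ
  | .or Φ Ψ => infTruth sat Λ Φ ∨ infTruth sat Λ Ψ
  | .next φ => sat φ (Λ 1)
  | .until_ φ ψ => ∃ i, sat ψ (Λ i) ∧ ∀ j < i, sat φ (Λ j)

open Filter

theorem finTruth_eventually_iff_infTruth {σ St : Type} (sat : σ → St → Prop) (Λ : ℕ → St)
    (Φ : PathFormula σ) : ∀ᶠ n in atTop, (finTruth sat Λ Φ n ↔ infTruth sat Λ Φ) := by
  induction Φ with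
  | state φ => exact .of_forall fun _ => Iff.rfl
  | neg Φ ih => exact ih.mono fun _ => not_congr
  | or Φ Ψ ihΦ ihΨ => exact (ihΦ.and ihΨ).mono fun _ h => or_congr h.1 h.2
  | next φ => exact (eventually_ge_atTop 1).mono fun _ hn => and_iff_right hn
  | until_ φ ψ =>
    by_cases h : infTruth sat Λ (.until_ φ ψ)
    · obtain ⟨i, hi⟩ := h
      filter_upwards [eventually_ge_atTop i] with n hn
      exact iff_of_true ⟨i, hn, hi⟩ ⟨i, hi⟩
    · exact .of_forall fun _ => iff_of_false (fun ⟨i, _, hi⟩ => h ⟨i, hi⟩) h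

theorem infinite_truth_iff_stable_finite_truth_general {St σ : Type}
    (sat : σ → St → Prop)
    (Λ : ℕ → St) (Φ : PathFormula σ) :
    infTruth sat Λ Φ ↔ ∃ k, ∀ n ≥ k, finTruth sat Λ Φ n := by
  rw [← eventually_atTop, eventually_congr (finTruth_eventually_iff_infTruth sat Λ Φ),
    eventually_const]

/-- An infinite path satisfies an ATL⁺ path formula `Φ` in the
infinite path semantics iff there exists `k` such that all finite prefixes of
length at least `k` satisfy `Φ` in the finite path semantics. -/
theorem infinite_truth_iff_stable_finite_truth {Agt St Act σ : Type}
    (M : CGM Agt St Act) (sat : σ → St → Prop)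
    (Λ : ℕ → St) (hΛ : M.IsPath Λ) (Φ : PathFormula σ) :
    infTruth sat Λ Φ ↔ ∃ k, ∀ n ≥ k, finTruth sat Λ Φ n :=
  infinite_truth_iff_stable_finite_truth_general sat Λ Φ
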